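/- arXiv:2601.06930 — 3 statements merged into one kernel-verified Lean document; each statement's English description precedes it below -/
import Mathlib

section
/- Let T be an LR tableau of shape λ/μ and even weight ν on [2n] with ℓ(μ) ≤ n. Then T fails the Sundaram property if and only if there exist t > i ≥ 0 such that T(n+t,1) = 2i+1. -/
/-- A partition: weakly decreasing, eventually-zero sequence of naturals.
`part k` is the `k`-th part (1-indexed; `part 0` is a dummy value ≥ `part 1`). -/
structure YPart where
  part : ℕ → ℕ
  antitone : ∀ i j : ℕ, i ≤ j → part j ≤ part i
  evZero : ∃ N, ∀ k, N ≤ k → part k = 0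

/-- The number of nonzero parts (length) of a partition. -/
noncomputable def YPart.len (p : YPart) : ℕ := sSup {k | 1 ≤ k ∧ p.part k ≠ 0}

/-- Containment of partitions (Young diagrams). -/
def YPart.Sub (m l : YPart) : Prop := ∀ k, m.part k ≤ l.part k

/-- A partition is even if `ν_{2i-1} = ν_{2i}` for all `i ≥ 1`. -/
def YPart.IsEven (p : YPart) : Prop := ∀ i : ℕ, p.part (2*i+1) = p.part (2*i+2)

/-- The empty partition. -/
def YPart.zero : YPart := ⟨fun _ => 0, fun _ _ _ => Nat.le_refl 0, ⟨0, fun _ _ => rfl⟩⟩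

/-- Cell `(k,j)` (1-indexed, matrix style) lies in the skew shape `λ/μ`. -/
def InShape (l m : YPart) (k j : ℕ) : Prop :=
  1 ≤ k ∧ m.part k < j ∧ j ≤ l.part k

/-- A semistandard skew tableau of shape `λ/μ` with entries in `[N] = {1,…,N}`;
entries outside the skew shape (including the cells of `μ`) are normalized to `0`. -/
structure IsSSYT (l m : YPart) (N : ℕ) (T : ℕ → ℕ → ℕ) : Prop where
  pos : ∀ k j, InShape l m k j → 1 ≤ T k j ∧ T k j ≤ N
  rowLe : ∀ k j, InShape l m k j → InShape l m k (j+1) → T k j ≤ T k (j+1)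
  colLt : ∀ k j, InShape l m k j → InShape l m (k+1) j → T k j < T (k+1) j
  outside : ∀ k j, ¬ InShape l m k j → T k j = 0

/-- The number of cells of `λ/μ` with entry `i` whose position satisfies `P`. -/
noncomputable def cnt (l m : YPart) (T : ℕ → ℕ → ℕ) (P : ℕ → ℕ → Prop) (i : ℕ) : ℕ :=
  {c : ℕ × ℕ | InShape l m c.1 c.2 ∧ T c.1 c.2 = i ∧ P c.1 c.2}.ncard

/-- A Littlewood–Richardson tableau of shape `λ/μ` and weight `ν` on `[N]`:
a semistandard skew tableau whose reverse row reading word (rows right to left,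
top to bottom) is Yamanouchi of weight `ν`.  The Yamanouchi condition is stated
on all prefixes of the reverse row word: a prefix ends at a cell `(k,j)` and
consists of all cells in earlier rows together with the cells `(k,b)`, `b ≥ j`. -/
structure IsLR (l m nu : YPart) (N : ℕ) (T : ℕ → ℕ → ℕ) : Prop where
  ssyt : IsSSYT l m N T
  weight : ∀ i, 1 ≤ i → cnt l m T (fun _ _ => True) i = nu.part i
  yam : ∀ k j i, 1 ≤ i →
    cnt l m T (fun a b => a < k ∨ (a = k ∧ j ≤ b)) (i+1) ≤
    cnt l m T (fun a b => a < k ∨ (a = k ∧ j ≤ b)) i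

/-- The Sundaram property: every odd entry `2i+1` lies in row `n+i` or above. -/
def Sundaram (n : ℕ) (l m : YPart) (T : ℕ → ℕ → ℕ) : Prop :=
  ∀ k j i, InShape l m k j → T k j = 2*i + 1 → k ≤ n + i

/-- A Sundaram violation occurs in row `k`: some odd entry `2i+1` appears in row
`k` with `k > n+i`. -/
def SundViolRow (n : ℕ) (l m : YPart) (T : ℕ → ℕ → ℕ) (k : ℕ) : Prop :=
  ∃ j i, InShape l m k j ∧ T k j = 2*i + 1 ∧ n + i < k

/-- The symplectic (King/Kwon) condition on a straight-shape tableau `G` of shape `g`: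
`G(k,1) ≥ 2k−1` for every row `k` of `g`. -/
def IsSymplectic (g : YPart) (G : ℕ → ℕ → ℕ) : Prop :=
  ∀ k, 1 ≤ k → k ≤ g.len → 2*k - 1 ≤ G k 1

/-- Row `i` of the partition `μ^{(mm)}` in the left-companion chain of `T`:
with `mm = 2n - r + 1`, the partition `μ^{(mm)}` is the shape occupied by the
entries `< r` (including the `0`-entries on the cells of `μ`) in rows
`r, r+1, …, 2n` of `T`; its `i`-th row comes from row `2n - mm + i` of `T`. -/
noncomputable def compShape (l : YPart) (T : ℕ → ℕ → ℕ) (n mm i : ℕ) : ℕ :=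
  {j : ℕ | 1 ≤ j ∧ j ≤ l.part (2*n - mm + i) ∧ T (2*n - mm + i) j < 2*n - mm + 1}.ncard

/-- The length (number of nonzero rows) of a shape given by its row-length function. -/
noncomputable def shapeLen (f : ℕ → ℕ) : ℕ := sSup {i | 1 ≤ i ∧ f i ≠ 0}

/-- The entry of the left companion tableau `G_μ(T)` in cell `(k,j)`:
the least `mm` such that `(k,j)` is a cell of `μ^{(mm)}`. -/
noncomputable def leftCompanion (l : YPart) (T : ℕ → ℕ → ℕ) (n k j : ℕ) : ℕ :=
  sInf {mm | j ≤ compShape l T n mm k}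

/-!
Below row `n` the cells of `μ` are gone, so the first column of rows `n+1, n+2, …` is strictly
increasing and each head `T(k,1)` is the least entry of its row.  A violating entry `2i+1` in
row `k > n+i` thus gives `T(k,1) ≤ 2(k-n) - 1`.  Walk up the first column: as long as the head
of row `n+s` is even, the bound `T(n+s,1) ≤ 2s-1` sharpens to `2s-2` and passes to row `n+s-1`.
The walk stops at an odd head `T(n+t,1) = 2i+1 ≤ 2t-1`, at the latest at row `n+1`.
-/

lemma YPart.part_eq_zero_of_len_lt (p : YPart) {k : ℕ} (hk : 1 ≤ k) (h : p.len < k) :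
    p.part k = 0 := by
  by_contra h0
  have hbdd : BddAbove {k | 1 ≤ k ∧ p.part k ≠ 0} := by
    obtain ⟨N, hN⟩ := p.evZero
    exact ⟨N, fun x hx => not_lt.mp fun hNx => hx.2 (hN x hNx.le)⟩
  exact absurd (le_csSup hbdd ⟨hk, h0⟩) (not_le.mpr h)

namespace InShape

variable {lam mu : YPart}

lemma first_col {k j : ℕ} (h : InShape lam mu k j) (hmu : mu.part k = 0) :
    InShape lam mu k 1 :=
  ⟨h.1, by omega, le_trans (by have := h.2.1; omega) h.2.2⟩

lemma first_col_of_succ {k : ℕ} (h : InShape lam mu (k + 1) 1) (hk : 1 ≤ k)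
    (hmu : mu.part k = 0) : InShape lam mu k 1 :=
  ⟨hk, by omega, h.2.2.trans (lam.antitone _ _ k.le_succ)⟩

end InShape

namespace IsSSYT

variable {lam mu : YPart} {N : ℕ} {T : ℕ → ℕ → ℕ}

lemma head_le (hS : IsSSYT lam mu N T) {k : ℕ} (hmu : mu.part k = 0) :
    ∀ j, InShape lam mu k j → T k 1 ≤ T k j
  | 0, h => absurd h.2.1 (by omega)
  | 1, _ => le_rfl
  | j + 2, h => by
    have hj : InShape lam mu k (j + 1) := ⟨h.1, by omega, by have := h.2.2; omega⟩
    exact (hS.head_le hmu (j + 1) hj).trans (hS.rowLe k (j + 1) hj h)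

lemma exists_odd_head_of_head_le (hS : IsSSYT lam mu N T) {n : ℕ} (hmu : mu.len ≤ n) :
    ∀ s, InShape lam mu (n + s + 1) 1 → T (n + s + 1) 1 ≤ 2 * s + 1 →
      ∃ t i : ℕ, i < t ∧ InShape lam mu (n + t) 1 ∧ T (n + t) 1 = 2 * i + 1
  | 0, hsh, hle => by
    rw [Nat.add_zero] at hsh hle
    exact ⟨1, 0, one_pos, hsh, by have := (hS.pos _ _ hsh).1; omega⟩
  | s + 1, hsh, hle => by
    rw [show n + (s + 1) + 1 = n + s + 1 + 1 by omega] at hsh hle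
    obtain ⟨m, hm⟩ | ⟨m, hm⟩ := Nat.even_or_odd (T (n + s + 1 + 1) 1)
    · have hmu0 : mu.part (n + s + 1) = 0 := mu.part_eq_zero_of_len_lt (by omega) (by omega)
      have hsh' := hsh.first_col_of_succ (by omega) hmu0
      have hcol := hS.colLt (n + s + 1) 1 hsh' hsh
      exact hS.exists_odd_head_of_head_le hmu s hsh' (by omega)
    · exact ⟨s + 2, m, by omega, hsh, hm⟩

end IsSSYT

theorem stmt8_general (n : ℕ) (lam mu nu : YPart)
    (hmu : mu.len ≤ n) (T : ℕ → ℕ → ℕ)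
    (hT : IsLR lam mu nu (2*n) T) :
    ¬ Sundaram n lam mu T ↔
      ∃ t i : ℕ, i < t ∧ InShape lam mu (n+t) 1 ∧ T (n+t) 1 = 2*i + 1 := by
  constructor
  · intro hns
    simp only [Sundaram, not_forall, not_le] at hns
    obtain ⟨k, j, i, hshape, hval, hlt⟩ := hns
    obtain ⟨s, rfl⟩ : ∃ s, k = n + s + 1 := ⟨k - n - 1, by omega⟩
    have hmu0 : mu.part (n + s + 1) = 0 := mu.part_eq_zero_of_len_lt (by omega) (by omega)
    have hhead := hT.ssyt.head_le hmu0 j hshape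
    exact hT.ssyt.exists_odd_head_of_head_le hmu s (hshape.first_col hmu0) (by omega)
  · rintro ⟨t, i, hti, hsh, hval⟩ hS
    have := hS (n + t) 1 i hsh hval
    omega

/-- An LR tableau of even weight with `ℓ(μ) ≤ n` fails the Sundaram
property iff `T(n+t,1) = 2i+1` for some `t > i ≥ 0`. -/
theorem stmt8 (n : ℕ) (lam mu nu : YPart) (hl : lam.len ≤ 2*n) (hsub : mu.Sub lam)
    (hmu : mu.len ≤ n) (hnu : nu.IsEven) (T : ℕ → ℕ → ℕ)
    (hT : IsLR lam mu nu (2*n) T) :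
    ¬ Sundaram n lam mu T ↔
      ∃ t i : ℕ, i < t ∧ InShape lam mu (n+t) 1 ∧ T (n+t) 1 = 2*i + 1 :=
  stmt8_general n lam mu nu hmu T hT
end

section
/- Let T be an LR tableau of shape λ/μ and even weight ν on [2n] with ℓ(μ) ≤ n, and suppose T fails the Sundaram property with minimal violating row n+t+1. Then ℓ(λ) ≥ n+t+2 and n ≥ t+2. -/
/- Evenness of `ν` means that the letters `2i+1` and `2i+2` occur equally often. If every `2i+2`
lay in the rows up to `n+t+1`, then the prefix of the reverse row word that stops just before a
violating `2i+1` in row `n+t+1` would already contain every `2i+2` but miss that `2i+1`,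
contradicting the Yamanouchi condition. So some `2i+2` sits in a row below `n+t+1`, whence
`ℓ(λ) ≥ n+t+2`, and `ℓ(λ) ≤ 2n` gives `n ≥ t+2`. -/

lemma YPart.bddAbove_support (p : YPart) : BddAbove {k | 1 ≤ k ∧ p.part k ≠ 0} := by
  obtain ⟨N, hN⟩ := p.evZero
  exact ⟨N, fun k hk => by_contra fun h => hk.2 (hN k (by omega))⟩

lemma InShape.le_len {l m : YPart} {k j : ℕ} (h : InShape l m k j) : k ≤ l.len :=
  le_csSup l.bddAbove_support ⟨h.1, by have := h.2; omega⟩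

lemma InShape.le_part_one {l m : YPart} {k j : ℕ} (h : InShape l m k j) : j ≤ l.part 1 :=
  h.2.2.trans (l.antitone 1 k h.1)

lemma IsSSYT.le_of_le {l m : YPart} {N : ℕ} {T : ℕ → ℕ → ℕ} (hT : IsSSYT l m N T)
    {k b j : ℕ} (hb : InShape l m k b) (hbj : b ≤ j) (hj : InShape l m k j) :
    T k b ≤ T k j := by
  induction j, hbj using Nat.le_induction with
  | base => exact le_rfl
  | succ j hbj ih =>
    have hj' : InShape l m k j := ⟨hb.1, hb.2.1.trans_le hbj, j.le_succ.trans hj.2.2⟩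
    exact (ih hj').trans (hT.rowLe k j hj' hj)

section cnt

variable {l m : YPart} {T : ℕ → ℕ → ℕ} {P Q : ℕ → ℕ → Prop} {i : ℕ}

lemma cnt_finite (l m : YPart) (T : ℕ → ℕ → ℕ) (P : ℕ → ℕ → Prop) (i : ℕ) :
    {c : ℕ × ℕ | InShape l m c.1 c.2 ∧ T c.1 c.2 = i ∧ P c.1 c.2}.Finite :=
  ((Set.finite_Icc 1 l.len).prod (Set.finite_Icc 1 (l.part 1))).subset
    fun _ hc => ⟨⟨hc.1.1, hc.1.le_len⟩, ⟨by have := hc.1.2.1; omega, hc.1.le_part_one⟩⟩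

lemma cnt_mono (h : ∀ a b, InShape l m a b → T a b = i → P a b → Q a b) :
    cnt l m T P i ≤ cnt l m T Q i :=
  Set.ncard_le_ncard (fun _ hc => ⟨hc.1, hc.2.1, h _ _ hc.1 hc.2.1 hc.2.2⟩) (cnt_finite ..)

lemma cnt_lt_cnt (h : ∀ a b, InShape l m a b → T a b = i → P a b → Q a b)
    {a b : ℕ} (hab : InShape l m a b) (hval : T a b = i) (hQ : Q a b) (hP : ¬ P a b) :
    cnt l m T P i < cnt l m T Q i :=
  Set.ncard_lt_ncard
    ⟨fun _ hc => ⟨hc.1, hc.2.1, h _ _ hc.1 hc.2.1 hc.2.2⟩,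
      fun hsub => hP (hsub (show (a, b) ∈ _ from ⟨hab, hval, hQ⟩)).2.2⟩
    (cnt_finite ..)

end cnt

lemma IsLR.exists_lower_cell_of_part_eq {l m nu : YPart} {N : ℕ} {T : ℕ → ℕ → ℕ}
    (hT : IsLR l m nu N T) {i k j : ℕ} (hi : 1 ≤ i) (hnu : nu.part i = nu.part (i + 1))
    (hin : InShape l m k j) (hval : T k j = i) :
    ∃ k' j', k < k' ∧ InShape l m k' j' ∧ T k' j' = i + 1 := by
  by_contra! hno
  let before : ℕ → ℕ → Prop := fun a b => a < k ∨ (a = k ∧ j + 1 ≤ b)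
  have hsucc : cnt l m T (fun _ _ => True) (i + 1) ≤ cnt l m T before (i + 1) := by
    refine cnt_mono fun a b hab hTab _ => ?_
    rcases lt_trichotomy a k with ha | rfl | ha
    · exact Or.inl ha
    · refine Or.inr ⟨rfl, Nat.succ_le_of_lt (lt_of_not_ge fun hbj => ?_)⟩
      have := hT.ssyt.le_of_le hab hbj hin
      omega
    · exact absurd hTab (hno a b ha hab)
  have hself : cnt l m T before i < cnt l m T (fun _ _ => True) i :=
    cnt_lt_cnt (fun _ _ _ _ _ => trivial) hin hval trivial (by simp [before])
  have : nu.part (i + 1) < nu.part i := calc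
    nu.part (i + 1) = cnt l m T (fun _ _ => True) (i + 1) := (hT.weight (i + 1) (by omega)).symm
    _ ≤ cnt l m T before (i + 1) := hsucc
    _ ≤ cnt l m T before i := hT.yam k (j + 1) i hi
    _ < cnt l m T (fun _ _ => True) i := hself
    _ = nu.part i := hT.weight i hi
  omega

theorem stmt12_general (n t : ℕ) (lam mu nu : YPart) (hl : lam.len ≤ 2*n)
    (hnu : nu.IsEven) (T : ℕ → ℕ → ℕ)
    (hT : IsLR lam mu nu (2*n) T)
    (hviol : SundViolRow n lam mu T (n+t+1)) :
    n + t + 2 ≤ lam.len ∧ t + 2 ≤ n := by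
  obtain ⟨j, i, hin, hval, -⟩ := hviol
  obtain ⟨k, j', hk, hkin, -⟩ :=
    hT.exists_lower_cell_of_part_eq (by omega) (hnu i) hin hval
  have := hkin.le_len
  omega

/-- If an LR tableau of even weight with `ℓ(μ) ≤ n` fails the
Sundaram property with minimal violating row `n+t+1`, then `ℓ(λ) ≥ n+t+2` and
`n ≥ t+2`. -/
theorem stmt12 (n t : ℕ) (lam mu nu : YPart) (hl : lam.len ≤ 2*n)
    (hsub : mu.Sub lam) (hmu : mu.len ≤ n) (hnu : nu.IsEven) (T : ℕ → ℕ → ℕ)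
    (hT : IsLR lam mu nu (2*n) T)
    (hviol : SundViolRow n lam mu T (n+t+1))
    (hmin : ∀ k, k < n+t+1 → ¬ SundViolRow n lam mu T k) :
    n + t + 2 ≤ lam.len ∧ t + 2 ≤ n :=
  stmt12_general n t lam mu nu hl hnu T hT hviol
end

section
/- Let T be an LR tableau of shape λ/μ and even weight ν on [2n] with ℓ(μ) ≤ n. If n = ℓ(μ) and the first column of T below row n reads T(n+1,1)=2, T(n+2,1)=4, …, T(n+t−1,1)=2(t−1), T(n+t,1)=2t, T(n+t+1,1)=2t+1, T(n+t+2,1)=2(t+1) (minimal Sundaram violation in row n+t+1), then the left companion G = G_μ(T) satisfies G(ℓ(μ)−k,1) = 2(ℓ(μ)−k) for 0 ≤ k ≤ t−1 and G(ℓ(μ)−t,1) ≤ 2(ℓ(μ)−t)−2; in particular G is not symplectic, with bottom-most symplectic violation in cell (ℓ(μ)−t,1). -/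
/-! Reading `compShape` at `mm = 2n - s`, the entry `G(k,1)` of the left companion is `2n - s`
for the largest `s ≤ 2n` such that row `k + s` of `T` has an entry `≤ s`. Below row `n = ℓ(μ)` the
first column of `T` is strictly increasing and carries the row minima. The prescribed entries
`2, 4, …, 2t` make `s = 2k` the answer for row `n - k` when `k < t`: after the entry `2t + 1` the
column still grows by at least one per row, which is just fast enough. For row `n - t` the entry
`2t + 2` in row `n + t + 2` already gives `s = 2t + 2`. -/

namespace YPart

theorem bddAbove_support_s17 (p : YPart) : BddAbove {k | 1 ≤ k ∧ p.part k ≠ 0} := by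
  obtain ⟨N, hN⟩ := p.evZero
  exact ⟨N, fun k hk => not_lt.mp fun h => hk.2 (hN k h.le)⟩

theorem part_eq_zero_of_len_lt_s17 (p : YPart) {r : ℕ} (hr : p.len < r) : p.part r = 0 := by
  by_contra h
  exact (le_csSup p.bddAbove_support_s17 ⟨by omega, h⟩).not_gt hr

theorem part_len_ne_zero (p : YPart) (h : p.len ≠ 0) : p.part p.len ≠ 0 := by
  have hne : {k | 1 ≤ k ∧ p.part k ≠ 0}.Nonempty := by
    by_contra hempty
    rw [Set.not_nonempty_iff_eq_empty] at hempty
    exact h (by rw [YPart.len, hempty, csSup_empty]; rfl)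
  exact (Nat.sSup_mem hne p.bddAbove_support_s17).2

end YPart

namespace IsSSYT

variable {l m : YPart} {N : ℕ} {T : ℕ → ℕ → ℕ}

theorem inShape_of_ne_zero (hT : IsSSYT l m N T) {k j : ℕ} (h : T k j ≠ 0) :
    InShape l m k j :=
  not_not.mp fun hout => h (hT.outside k j hout)

theorem first_le_of_part_eq_zero (hT : IsSSYT l m N T) {r : ℕ} (hm : m.part r = 0) :
    ∀ {j}, InShape l m r j → T r 1 ≤ T r j
  | 0, h => absurd h.2.1 (by omega)
  | 1, _ => le_rfl
  | j + 2, h => by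
    have hj : InShape l m r (j + 1) := ⟨h.1, by omega, by have := h.2.2; omega⟩
    exact (first_le_of_part_eq_zero hT hm hj).trans (hT.rowLe r (j + 1) hj h)

theorem first_add_le_of_part_eq_zero (hT : IsSSYT l m N T) {a : ℕ} (ha : 1 ≤ a)
    (hm : m.part a = 0) :
    ∀ {d}, InShape l m (a + d) 1 → T a 1 + d ≤ T (a + d) 1
  | 0, _ => le_rfl
  | d + 1, h => by
    have hd : InShape l m (a + d) 1 :=
      ⟨by omega, by have := hm ▸ m.antitone a (a + d) (by omega); omega,
        h.2.2.trans (l.antitone _ _ (by omega))⟩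
    have hstep := hT.colLt (a + d) 1 hd h
    have := first_add_le_of_part_eq_zero hT ha hm hd
    show T a 1 + (d + 1) ≤ T (a + d + 1) 1
    omega

end IsSSYT

theorem one_le_compShape_iff {l : YPart} {T : ℕ → ℕ → ℕ} {n mm k : ℕ} :
    1 ≤ compShape l T n mm k ↔
      ∃ j, 1 ≤ j ∧ j ≤ l.part (2*n - mm + k) ∧ T (2*n - mm + k) j < 2*n - mm + 1 := by
  have hfin : {j | 1 ≤ j ∧ j ≤ l.part (2*n - mm + k) ∧ T (2*n - mm + k) j < 2*n - mm + 1}.Finite :=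
    (Set.finite_Icc 1 (l.part (2*n - mm + k))).subset fun j hj => ⟨hj.1, hj.2.1⟩
  exact Nat.one_le_iff_ne_zero.trans (Nat.pos_iff_ne_zero.symm.trans (Set.ncard_pos hfin))

section leftCompanion

variable {l : YPart} {T : ℕ → ℕ → ℕ} {n k s : ℕ}

theorem one_le_compShape_sub (hs : s ≤ 2*n)
    (hrow : ∃ j, 1 ≤ j ∧ j ≤ l.part (k + s) ∧ T (k + s) j ≤ s) :
    1 ≤ compShape l T n (2*n - s) k := by
  refine one_le_compShape_iff.mpr ?_
  rw [show 2*n - (2*n - s) = s by omega, add_comm s k]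
  obtain ⟨j, hj⟩ := hrow
  exact ⟨j, hj.1, hj.2.1, by omega⟩

theorem leftCompanion_le (hs : s ≤ 2*n)
    (hrow : ∃ j, 1 ≤ j ∧ j ≤ l.part (k + s) ∧ T (k + s) j ≤ s) :
    leftCompanion l T n k 1 ≤ 2*n - s :=
  Nat.sInf_le (one_le_compShape_sub hs hrow)

theorem leftCompanion_eq (hs : s ≤ 2*n)
    (hrow : ∃ j, 1 ≤ j ∧ j ≤ l.part (k + s) ∧ T (k + s) j ≤ s)
    (hbelow : ∀ s', s < s' → s' ≤ 2*n → ∀ j, 1 ≤ j → j ≤ l.part (k + s') → s' < T (k + s') j) :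
    leftCompanion l T n k 1 = 2*n - s := by
  refine le_antisymm (leftCompanion_le hs hrow) ?_
  refine le_csInf ⟨_, one_le_compShape_sub hs hrow⟩ fun mm hmm => not_lt.mp fun hlt => ?_
  obtain ⟨j, hj1, hjl, hjT⟩ := one_le_compShape_iff.mp hmm
  have := hbelow (2*n - mm) (by omega) (by omega) j hj1 (by rwa [add_comm])
  rw [add_comm k] at this
  omega

end leftCompanion

theorem IsSSYT.add_min_le_first {l m : YPart} {N n t : ℕ} {T : ℕ → ℕ → ℕ}
    (hT : IsSSYT l m N T) (hm : ∀ r, n < r → m.part r = 0)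
    (hcol : ∀ k, 1 ≤ k → k ≤ t → T (n+k) 1 = 2*k) (hodd : T (n+t+1) 1 = 2*t + 1)
    {e : ℕ} (he : 1 ≤ e) (hin : InShape l m (n + e) 1) : e + min e t ≤ T (n + e) 1 := by
  rcases le_or_gt e t with het | hte
  · rw [hcol e he het]
    omega
  · have hrow := hT.first_add_le_of_part_eq_zero (a := n + t + 1) (d := e - (t + 1)) (by omega)
      (hm _ (by omega)) (by rwa [show n + t + 1 + (e - (t + 1)) = n + e by omega])
    rw [hodd, show n + t + 1 + (e - (t + 1)) = n + e by omega] at hrow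
    omega

theorem leftCompanion_sub_eq {l m : YPart} {N n t k : ℕ} {T : ℕ → ℕ → ℕ}
    (hT : IsSSYT l m N T) (hkn : k ≤ n) (hkt : k < t) (hm : ∀ r, n < r → m.part r = 0)
    (hgrow : ∀ e, 1 ≤ e → InShape l m (n + e) 1 → e + min e t ≤ T (n + e) 1)
    (hrow : ∃ j, 1 ≤ j ∧ j ≤ l.part (n + k) ∧ T (n + k) j ≤ 2*k) :
    leftCompanion l T n (n - k) 1 = 2*(n - k) := by
  rw [show 2*(n - k) = 2*n - 2*k by omega]
  refine leftCompanion_eq (by omega) (by rwa [show n - k + 2*k = n + k by omega]) ?_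
  intro s hs _ j hj hjl
  rw [show n - k + s = n + (s - k) by omega] at hjl ⊢
  have hm0 := hm (n + (s - k)) (by omega)
  have hfirst := hT.first_le_of_part_eq_zero hm0 ⟨by omega, by omega, hjl⟩
  have := hgrow (s - k) (by omega) ⟨by omega, by omega, hj.trans hjl⟩
  omega

theorem stmt17_general (n t : ℕ) (lam mu nu : YPart)
    (hsub : mu.Sub lam) (hn : n = mu.len) (T : ℕ → ℕ → ℕ)
    (hT : IsLR lam mu nu (2*n) T) (ht : 1 ≤ t)
    (hcol : ∀ k, 1 ≤ k → k ≤ t → T (n+k) 1 = 2*k)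
    (hodd : T (n+t+1) 1 = 2*t + 1)
    (heven : T (n+t+2) 1 = 2*(t+1)) :
    (∀ k, k ≤ t - 1 →
        leftCompanion lam T n (mu.len - k) 1 = 2*(mu.len - k)) ∧
    leftCompanion lam T n (mu.len - t) 1 ≤ 2*(mu.len - t) - 2 ∧
    ¬ IsSymplectic mu (leftCompanion lam T n) ∧
    leftCompanion lam T n (mu.len - t) 1 < 2*(mu.len - t) - 1 ∧
    (∀ k, mu.len - t < k → k ≤ mu.len →
        2*k - 1 ≤ leftCompanion lam T n k 1) := by
  have hin : InShape lam mu (n+t+2) 1 := hT.ssyt.inShape_of_ne_zero (by omega)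
  have htn : t + 1 ≤ n := by have := (hT.ssyt.pos _ _ hin).2; omega
  have hmu : ∀ r, n < r → mu.part r = 0 := fun r hr => mu.part_eq_zero_of_len_lt_s17 (hn ▸ hr)
  have hG : ∀ k < t, leftCompanion lam T n (n - k) 1 = 2*(n - k) := by
    intro k hk
    refine leftCompanion_sub_eq hT.ssyt (by omega) hk hmu
      (fun e he => hT.ssyt.add_min_le_first hmu hcol hodd he) ?_
    rcases k.eq_zero_or_pos with rfl | hk0
    · have hμn : mu.part n ≠ 0 := hn ▸ mu.part_len_ne_zero (by omega)
      exact ⟨1, le_rfl, by rw [Nat.add_zero]; have := hsub n; omega,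
        (hT.ssyt.outside n 1 fun h => by have := h.2.1; omega).le⟩
    · exact ⟨1, le_rfl, hin.2.2.trans (lam.antitone _ _ (by omega)), (hcol k hk0 hk.le).le⟩
  have hG_violation : leftCompanion lam T n (n - t) 1 ≤ 2*(n - t) - 2 := by
    have := leftCompanion_le (l := lam) (T := T) (n := n) (k := n - t) (s := 2*t + 2) (by omega)
      ⟨1, le_rfl, by rw [show n - t + (2*t + 2) = n + t + 2 by omega]; exact hin.2.2,
        by rw [show n - t + (2*t + 2) = n + t + 2 by omega, heven]; omega⟩
    omega
  rw [← hn]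
  refine ⟨fun k hk => hG k (by omega), hG_violation, fun hsym => ?_, by omega, fun k hk hkn => ?_⟩
  · have := hsym (n - t) (by omega) (by omega)
    omega
  · have := hG (n - k) (by omega)
    rw [show n - (n - k) = k by omega] at this
    omega

/-- Case `n = ℓ(μ)` with first column below row `n` reading
`2, 4, …, 2t, 2t+1, 2(t+1)` (minimal Sundaram violation in row `n+t+1`): the
left companion `G = G_μ(T)` satisfies `G(ℓ(μ)−k,1) = 2(ℓ(μ)−k)` for
`0 ≤ k ≤ t−1` and `G(ℓ(μ)−t,1) ≤ 2(ℓ(μ)−t)−2`; in particular `G` is not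
symplectic, with bottom-most symplectic violation in cell `(ℓ(μ)−t,1)`. -/
theorem stmt17 (n t : ℕ) (lam mu nu : YPart) (hl : lam.len ≤ 2*n)
    (hsub : mu.Sub lam) (hn : n = mu.len) (hnu : nu.IsEven) (T : ℕ → ℕ → ℕ)
    (hT : IsLR lam mu nu (2*n) T) (ht : 1 ≤ t)
    (hcol : ∀ k, 1 ≤ k → k ≤ t → T (n+k) 1 = 2*k)
    (hodd : T (n+t+1) 1 = 2*t + 1)
    (heven : T (n+t+2) 1 = 2*(t+1)) :
    (∀ k, k ≤ t - 1 →
        leftCompanion lam T n (mu.len - k) 1 = 2*(mu.len - k)) ∧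
    leftCompanion lam T n (mu.len - t) 1 ≤ 2*(mu.len - t) - 2 ∧
    ¬ IsSymplectic mu (leftCompanion lam T n) ∧
    leftCompanion lam T n (mu.len - t) 1 < 2*(mu.len - t) - 1 ∧
    (∀ k, mu.len - t < k → k ≤ mu.len →
        2*k - 1 ≤ leftCompanion lam T n k 1) :=
  stmt17_general n t lam mu nu hsub hn T hT ht hcol hodd heven
end
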